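/- For n ≥ 2, the dominance number of the commuting graph Δ(B_n) is 3: there is a dominating set of size 3, and no dominating set of size 2 or 1 exists. -/

import Mathlib

/-!
Distinct vertices `(i, j)` and `(k, l)` of `Δ(B_n)` commute iff `j ≠ k` and `l ≠ i`, so a vertex
`(a, b)` fails to dominate exactly the other vertices with first coordinate `b` or second
coordinate `a`. Given two vertices `(a, b)` and `(c, d)`, the vertex `(d, a)` is dominated by
neither; if it coincides with one of them, a vertex `(a, e)` or `(e, a)` with `e ≠ a` is.
Conversely, for `a ≠ b` the set `{(a, a), (a, b), (b, a)}` dominates.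
-/

/-- Multiplication of nonzero elements of the Brandt semigroup `B_n`:
`(i,j)·(k,l) = (i,l)` if `j = k`, and `0` (here `none`) otherwise. -/
def brandtMul {n : ℕ} (x y : Fin n × Fin n) : Option (Fin n × Fin n) :=
  if x.2 = y.1 then some (x.1, y.2) else none

/-- The commuting graph of the Brandt semigroup `B_n`. -/
def brandtGraph (n : ℕ) : SimpleGraph (Fin n × Fin n) where
  Adj x y := x ≠ y ∧ brandtMul x y = brandtMul y x
  symm := by constructor; intro x y h; exact ⟨h.1.symm, h.2.symm⟩
  loopless := by constructor; intro x h; exact h.1 rfl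

instance {n : ℕ} : DecidableRel (brandtGraph n).Adj :=
  fun x y => decidable_of_iff (x ≠ y ∧ brandtMul x y = brandtMul y x) Iff.rfl

namespace SimpleGraph

variable {V : Type*} (G : SimpleGraph V)

def IsDominating (D : Set V) : Prop := ∀ v ∉ D, ∃ d ∈ D, G.Adj v d

variable {G}

theorem IsDominating.mono {D E : Set V} (hD : G.IsDominating D) (hDE : D ⊆ E) :
    G.IsDominating E := by
  intro v hv
  obtain ⟨d, hd, hvd⟩ := hD v (fun h => hv (hDE h))
  exact ⟨d, hDE hd, hvd⟩

theorem three_le_ncard_of_isDominating [Finite V] [Nonempty V]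
    (hpair : ∀ a b : V, ¬G.IsDominating {a, b}) {D : Set V} (hD : G.IsDominating D) :
    3 ≤ D.ncard := by
  by_contra! hlt
  obtain ⟨a, b, hab⟩ : ∃ a b : V, D ⊆ {a, b} := by
    interval_cases h : D.ncard
    · obtain rfl := (Set.ncard_eq_zero D.toFinite).mp h
      exact ⟨Classical.arbitrary V, Classical.arbitrary V, Set.empty_subset _⟩
    · obtain ⟨a, rfl⟩ := Set.ncard_eq_one.mp h
      exact ⟨a, a, by simp⟩
    · obtain ⟨a, b, -, rfl⟩ := Set.ncard_eq_two.mp h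
      exact ⟨a, b, subset_rfl⟩
  exact hpair a b (hD.mono hab)

end SimpleGraph

theorem brandtGraph_adj_iff {n : ℕ} {x y : Fin n × Fin n} :
    (brandtGraph n).Adj x y ↔ x ≠ y ∧ x.2 ≠ y.1 ∧ y.2 ≠ x.1 := by
  obtain ⟨a, b⟩ := x
  obtain ⟨c, d⟩ := y
  simp only [brandtGraph, brandtMul]
  grind

theorem Prod.exists_ne_ne_fst_eq_or_snd_eq {α : Type*} [Nontrivial α] (a b c d : α) :
    ∃ w : α × α, w ≠ (a, b) ∧ w ≠ (c, d) ∧ (w.1 = b ∨ w.2 = a) ∧ (w.1 = d ∨ w.2 = c) := by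
  obtain ⟨e, he⟩ := exists_ne a
  by_cases h₁ : (d, a) = (a, b)
  · exact ⟨(a, e), by grind⟩
  by_cases h₂ : (d, a) = (c, d)
  · exact ⟨(e, a), by grind⟩
  exact ⟨(d, a), h₁, h₂, by simp⟩

theorem brandtGraph_isDominating_triple {n : ℕ} {a b : Fin n} (hab : a ≠ b) :
    (brandtGraph n).IsDominating {(a, a), (a, b), (b, a)} := by
  rintro ⟨i, j⟩ hv
  simp only [Set.mem_insert_iff, Set.mem_singleton_iff, Prod.mk.injEq, not_or] at hv
  simp only [Set.mem_insert_iff, Set.mem_singleton_iff, exists_eq_or_imp, exists_eq_left,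
    brandtGraph_adj_iff]
  -- `(b, a)` dominates `(i, j)` if `j = a`, otherwise `(a, a)` does if `i = b`, else `(a, b)` does
  grind

theorem brandtGraph_not_isDominating_pair {n : ℕ} (hn : 2 ≤ n) (x y : Fin n × Fin n) :
    ¬(brandtGraph n).IsDominating {x, y} := by
  have : Nontrivial (Fin n) := Fin.nontrivial_iff_two_le.mpr hn
  obtain ⟨w, hwx, hwy, hw⟩ := Prod.exists_ne_ne_fst_eq_or_snd_eq x.1 x.2 y.1 y.2
  intro hD
  obtain ⟨d, hd, hwd⟩ := hD w (by simp [hwx, hwy])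
  rw [brandtGraph_adj_iff] at hwd
  rcases hd with rfl | rfl <;> grind

theorem brandt_domination_number (n : ℕ) (hn : 2 ≤ n) :
    (∃ D : Set (Fin n × Fin n), D.ncard = 3 ∧
      ∀ v ∉ D, ∃ d ∈ D, (brandtGraph n).Adj v d) ∧
    ∀ D : Set (Fin n × Fin n),
      (∀ v ∉ D, ∃ d ∈ D, (brandtGraph n).Adj v d) → 3 ≤ D.ncard := by
  have hne : (⟨0, by omega⟩ : Fin n) ≠ ⟨1, by omega⟩ := by simp [Fin.ext_iff]
  have : Nonempty (Fin n) := ⟨⟨0, by omega⟩⟩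
  refine ⟨⟨_, ?_, brandtGraph_isDominating_triple hne⟩, fun D hD =>
    SimpleGraph.three_le_ncard_of_isDominating (brandtGraph_not_isDominating_pair hn) hD⟩
  exact Set.ncard_eq_three.mpr ⟨_, _, _, by simp [hne], by simp [hne], by simp [hne.symm], rfl⟩
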